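/- arXiv:1303.3968 — 5 statements merged into one kernel-verified Lean document; each statement's English description precedes it below -/
import Mathlib

section
/- Let p and k be positive integers with k ≥ 2p, and let d₁,…,d_k be positive integers with d₁ = ⋯ = d_p = 1 and d_{k−p+1} = ⋯ = d_k = 1. Let (a b; c d) = ∏_{i=1}^k (0 1; 1 d_i). Let L > 1 be a real number with F_p² ≥ log L. Then |b/d − 1/φ| ≤ 2/log L and |c/d − 1/φ| ≤ 2/log L, where φ = (1+√5)/2 is the golden ratio. -/
/-! Since the word starts with `p` ones, its product is `(gen 1)^p * M`, and
`(gen 1)^p = (F_{p-1} F_p; F_p F_{p+1})`. Hence `b/d` is the image of `y = M₀₁/M₁₁ ∈ [0, 1]`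
under the Möbius map of `(gen 1)^p`, which fixes `φ⁻¹` and has determinant `±1` (Cassini), so
`|b/d - φ⁻¹| ≤ |y - φ⁻¹| / F_{p+1}² ≤ 1 / F_p² ≤ 1 / log L`. Every generator is symmetric,
so reversing the word transposes the product; as the word also ends with `p` ones, the bound
for `c/d` is the bound for `b/d` of the reversed word. -/

open Real

noncomputable section

/-- The generator `(0 1; 1 d)`. -/
def gen (d : ℕ) : Matrix (Fin 2) (Fin 2) ℤ := !![0, 1; 1, (d : ℤ)]

open Nat

lemma mobius_sub_mobius {K : Type*} [Field K] (a b c d x y : K) (hx : c * x + d ≠ 0)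
    (hy : c * y + d ≠ 0) :
    (a * x + b) / (c * x + d) - (a * y + b) / (c * y + d) =
      (a * d - b * c) * (x - y) / ((c * x + d) * (c * y + d)) := by
  rw [div_sub_div _ _ hx hy]
  ring

lemma gen_one_pow_succ (n : ℕ) :
    gen 1 ^ (n + 1) = !![(fib n : ℤ), fib (n + 1); fib (n + 1), fib (n + 2)] := by
  induction n with
  | zero => ext i j; fin_cases i <;> fin_cases j <;> rfl
  | succ n ih =>
    rw [pow_succ, ih]
    ext i j
    fin_cases i <;> fin_cases j <;>
      simp [gen, Matrix.mul_apply, fib_add_two (n := n + 1), fib_add_two (n := n)]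

lemma fib_mul_fib_add_two_sub_sq (n : ℕ) :
    (fib n * fib (n + 2) - fib (n + 1) ^ 2 : ℤ) = (-1) ^ (n + 1) := by
  have h := congrArg Matrix.det (gen_one_pow_succ n)
  rw [Matrix.det_pow, gen, Matrix.det_fin_two_of, Matrix.det_fin_two_of] at h
  linear_combination -h

lemma inv_goldenRatio_sq : goldenRatio⁻¹ ^ 2 = 1 - goldenRatio⁻¹ := by
  rw [inv_goldenRatio]
  linear_combination goldenConj_sq

lemma fib_mobius_inv_goldenRatio (n : ℕ) :
    (fib n * goldenRatio⁻¹ + fib (n + 1)) / (fib (n + 1) * goldenRatio⁻¹ + fib (n + 2)) =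
      goldenRatio⁻¹ := by
  have hpos : (0 : ℝ) < fib (n + 1) * goldenRatio⁻¹ + fib (n + 2) := by
    have : 0 < fib (n + 2) := fib_pos.2 (by omega)
    positivity
  rw [div_eq_iff hpos.ne', fib_add_two]
  push_cast
  linear_combination -(fib (n + 1) : ℝ) * inv_goldenRatio_sq

lemma abs_fib_mobius_sub_inv_goldenRatio_le (n : ℕ) {y : ℝ} (hy₀ : 0 ≤ y) (hy₁ : y ≤ 1) :
    |(fib n * y + fib (n + 1)) / (fib (n + 1) * y + fib (n + 2)) - goldenRatio⁻¹| ≤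
      1 / (fib (n + 2) : ℝ) ^ 2 := by
  have hF : (0 : ℝ) < fib (n + 2) := by exact_mod_cast fib_pos.2 (by omega)
  have hg₀ : 0 < goldenRatio⁻¹ := inv_pos.2 goldenRatio_pos
  have hg₁ : goldenRatio⁻¹ < 1 := inv_lt_one_of_one_lt₀ one_lt_goldenRatio
  have hDy : (fib (n + 2) : ℝ) ≤ fib (n + 1) * y + fib (n + 2) := by
    simp only [le_add_iff_nonneg_left]; positivity
  have hDg : (fib (n + 2) : ℝ) ≤ fib (n + 1) * goldenRatio⁻¹ + fib (n + 2) := by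
    simp only [le_add_iff_nonneg_left]; positivity
  have hcassini : |(fib n * fib (n + 2) - fib (n + 1) * fib (n + 1) : ℝ)| = 1 := by
    rw [← sq, ← abs_neg_one_pow (n + 1)]
    exact_mod_cast congrArg abs (fib_mul_fib_add_two_sub_sq n)
  have hdist : |y - goldenRatio⁻¹| ≤ 1 := abs_le.2 ⟨by linarith, by linarith⟩
  have hden := mul_le_mul hDy hDg hF.le (hF.trans_le hDy).le
  conv_lhs => rw [← fib_mobius_inv_goldenRatio n]
  rw [mobius_sub_mobius _ _ _ _ _ _ (hF.trans_le hDy).ne' (hF.trans_le hDg).ne', abs_div,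
    abs_mul, hcassini, one_mul, abs_of_pos ((mul_pos hF hF).trans_le hden), sq]
  exact div_le_div₀ zero_le_one hdist (by positivity) hden

lemma prod_map_gen_entries (l : List ℕ) (hpos : ∀ d ∈ l, 0 < d) :
    0 ≤ (l.map gen).prod 0 1 ∧ (l.map gen).prod 0 1 ≤ (l.map gen).prod 1 1 ∧
      0 < (l.map gen).prod 1 1 := by
  induction l with
  | nil => simp
  | cons d t ih =>
    obtain ⟨hb, hbd, hd⟩ := ih fun x hx => hpos x (List.mem_cons_of_mem _ hx)
    have hd₁ : (1 : ℤ) ≤ d := by exact_mod_cast hpos d List.mem_cons_self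
    simp only [List.map_cons, List.prod_cons, gen, Matrix.mul_apply, Fin.sum_univ_two,
      Matrix.of_apply, Matrix.cons_val', Matrix.cons_val_zero, Matrix.cons_val_one,
      Matrix.cons_val_fin_one, zero_mul, one_mul, zero_add]
    refine ⟨hbd.trans' hb, ?_, ?_⟩ <;> nlinarith

lemma prod_map_gen_eq_gen_one_pow_mul {l : List ℕ} {p : ℕ} (hlen : p ≤ l.length)
    (h1 : ∀ d ∈ l.take p, d = 1) :
    (l.map gen).prod = gen 1 ^ p * ((l.drop p).map gen).prod := by
  have hrep : l.take p = List.replicate p 1 :=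
    List.eq_replicate_iff.2 ⟨List.length_take_of_le hlen, h1⟩
  conv_lhs => rw [← List.take_append_drop p l, List.map_append, List.prod_append, hrep]
  simp [List.prod_replicate]

lemma transpose_prod_map_gen (l : List ℕ) :
    ((l.map gen).prod).transpose = (l.reverse.map gen).prod := by
  have hsymm : Matrix.transpose ∘ gen = gen := by
    ext d i j
    fin_cases i <;> fin_cases j <;> rfl
  rw [Matrix.transpose_list_prod, List.map_map, hsymm, List.map_reverse]

lemma abs_prod_map_gen_ratio_sub_inv_goldenRatio_le (n : ℕ) {l : List ℕ}
    (hlen : n + 1 ≤ l.length) (hpos : ∀ d ∈ l, 0 < d) (h1 : ∀ d ∈ l.take (n + 1), d = 1) :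
    |(((l.map gen).prod 0 1 : ℤ) : ℝ) / (((l.map gen).prod 1 1 : ℤ) : ℝ) - goldenRatio⁻¹| ≤
      1 / (fib (n + 2) : ℝ) ^ 2 := by
  obtain ⟨hb, hbd, hd⟩ :=
    prod_map_gen_entries (l.drop (n + 1)) fun d hd => hpos d (List.mem_of_mem_drop hd)
  rw [prod_map_gen_eq_gen_one_pow_mul hlen h1, gen_one_pow_succ]
  generalize ((l.drop (n + 1)).map gen).prod = M at hb hbd hd
  have hd' : (0 : ℝ) < M 1 1 := by exact_mod_cast hd
  have hratio : ((!![(fib n : ℤ), fib (n + 1); fib (n + 1), fib (n + 2)] * M) 0 1 : ℝ) /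
      ((!![(fib n : ℤ), fib (n + 1); fib (n + 1), fib (n + 2)] * M) 1 1 : ℝ) =
      (fib n * (M 0 1 / M 1 1) + fib (n + 1)) /
        (fib (n + 1) * (M 0 1 / M 1 1) + fib (n + 2)) := by
    simp only [Matrix.mul_apply, Fin.sum_univ_two, Matrix.of_apply, Matrix.cons_val',
      Matrix.cons_val_zero, Matrix.cons_val_one, Matrix.empty_val', Matrix.cons_val_fin_one]
    push_cast
    field_simp
  rw [hratio]
  exact abs_fib_mobius_sub_inv_goldenRatio_le n (div_nonneg (by exact_mod_cast hb) hd'.le)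
    ((div_le_one hd').2 (by exact_mod_cast hbd))

theorem ratio_close_to_golden_ratio
    (p k : ℕ) (hp : 1 ≤ p) (hk : 2*p ≤ k)
    (l : List ℕ) (hlen : l.length = k) (hpos : ∀ d ∈ l, 0 < d)
    (h1 : ∀ d ∈ l.take p, d = 1) (h2 : ∀ d ∈ l.drop (k - p), d = 1)
    (L : ℝ) (hL : 1 < L) (hfib : Real.log L ≤ (Nat.fib p : ℝ)^2) :
    |(((l.map gen).prod 0 1 : ℤ) : ℝ) / (((l.map gen).prod 1 1 : ℤ) : ℝ) -
        1 / ((1 + Real.sqrt 5) / 2)| ≤ 2 / Real.log L ∧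
    |(((l.map gen).prod 1 0 : ℤ) : ℝ) / (((l.map gen).prod 1 1 : ℤ) : ℝ) -
        1 / ((1 + Real.sqrt 5) / 2)| ≤ 2 / Real.log L := by
  obtain ⟨n, rfl⟩ : ∃ n, p = n + 1 := ⟨p - 1, by omega⟩
  have hlog : 0 < log L := log_pos hL
  have hbound : 1 / (fib (n + 2) : ℝ) ^ 2 ≤ 2 / log L := calc
    1 / (fib (n + 2) : ℝ) ^ 2 ≤ 1 / log L := by
      gcongr
      exact hfib.trans (pow_le_pow_left₀ (by positivity) (by exact_mod_cast fib_le_fib_succ) 2)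
    _ ≤ 2 / log L := by gcongr; norm_num
  have hfirst := abs_prod_map_gen_ratio_sub_inv_goldenRatio_le n (by omega) hpos h1
  have hlast := abs_prod_map_gen_ratio_sub_inv_goldenRatio_le n (l := l.reverse)
    (by rw [List.length_reverse]; omega) (by simpa using hpos)
    fun d hd => h2 d (by rwa [List.take_reverse, hlen, List.mem_reverse] at hd)
  rw [← transpose_prod_map_gen, Matrix.transpose_apply, Matrix.transpose_apply] at hlast
  rw [one_div goldenRatio]
  exact ⟨hfirst.trans hbound, hlast.trans hbound⟩

end
end

section
/- Let ε₀ ∈ (0, 1/2500), let A ≥ 2 be a real number, and let N be an integer large enough that J ≥ 10. Then for all integers 0 ≤ j < h ≤ 2J+1 one has ∏_{n=j+1}^{h} (2⁹·A³·log(N_{n−J}/Ñ_{n−1−J})) ≤ ((1−ε₀)^{j₀(j,h)} · log N)^{(7/4)(h−j)}. -/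
/-!
Write `L = log N` and `B = (1 - ε₀) ^ j₀ · L`. Every `N_k` is a power `N ^ e(k)`, so the `n`-th
logarithm is `(e(n - J) - e(n - 1 - J)) · L`, and the increments of `e` are at most
`(1 - ε₀) ^ |n - J - 1| ≤ (1 - ε₀) ^ j₀`. Unwinding the floor in the definition of `J` gives
`(1 - ε₀) ^ J · L ≥ (10A)⁴ / ε₀²`, hence `B ≥ (10A)⁴` since `j₀ ≤ J`. Then
`2⁹A³ ≤ (10A)³ ≤ B ^ (3/4)`, so every factor is at most `B ^ (7/4)`.
-/

open Real

noncomputable section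

/-- `J = ⌊(log log N − 4 log(10A) + 2 log ε₀)/(−log(1−ε₀))⌋`. -/
def Jdef (ε₀ A : ℝ) (N : ℕ) : ℤ :=
  ⌊(Real.log (Real.log N) - 4 * Real.log (10 * A) + 2 * Real.log ε₀) /
      (-(Real.log (1 - ε₀)))⌋

/-- The sequence `N_j`, `−1−J ≤ j ≤ J+1`:
`N_j = N^{(1−ε₀)^{1−j}/(2−ε₀)}` for `j ≤ 1`, `N_j = N^{1−(1−ε₀)^j/(2−ε₀)}` for
`0 ≤ j ≤ J` (the formulas agree for `j = 0, 1`), and `N_{J+1} = N`. -/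
def Nseq (ε₀ A : ℝ) (N : ℕ) (j : ℤ) : ℝ :=
  if j ≤ 1 then (N : ℝ) ^ ((1 - ε₀) ^ (1 - j) / (2 - ε₀))
  else if j ≤ Jdef ε₀ A N then (N : ℝ) ^ (1 - (1 - ε₀) ^ j / (2 - ε₀))
  else (N : ℝ)

/-- `Ñ_{n−J}`: equals `N_{n−J}` for `n ≥ 1` and `1` for `n = 0`. -/
def Ntil (ε₀ A : ℝ) (N : ℕ) (n : ℕ) : ℝ :=
  if n = 0 then 1 else Nseq ε₀ A N ((n : ℤ) - Jdef ε₀ A N)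

/-- `j₀(j,h) = min{|n − J − 1| : j+1 ≤ n ≤ h}`. -/
def j0 (ε₀ A : ℝ) (N : ℕ) (j h : ℕ) : ℤ :=
  sInf {m : ℤ | ∃ n : ℕ, j + 1 ≤ n ∧ n ≤ h ∧ m = |(n : ℤ) - Jdef ε₀ A N - 1|}

def NseqExponent (ε₀ : ℝ) (J k : ℤ) : ℝ :=
  if k ≤ 1 then (1 - ε₀) ^ (1 - k) / (2 - ε₀)
  else if k ≤ J then 1 - (1 - ε₀) ^ k / (2 - ε₀)
  else 1

lemma Nseq_eq_rpow (ε₀ A : ℝ) (N : ℕ) (k : ℤ) :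
    Nseq ε₀ A N k = (N : ℝ) ^ NseqExponent ε₀ (Jdef ε₀ A N) k := by
  unfold Nseq NseqExponent
  split_ifs <;> simp

lemma log_Nseq (ε₀ A : ℝ) {N : ℕ} (hN : 0 < N) (k : ℤ) :
    Real.log (Nseq ε₀ A N k) = NseqExponent ε₀ (Jdef ε₀ A N) k * Real.log N := by
  rw [Nseq_eq_rpow, Real.log_rpow (by exact_mod_cast hN)]

section NseqExponent

variable {ε₀ : ℝ} {J : ℤ}

lemma NseqExponent_of_one_le {k : ℤ} (hε : ε₀ < 1) (hk : 1 ≤ k) (hkJ : k ≤ J) :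
    NseqExponent ε₀ J k = 1 - (1 - ε₀) ^ k / (2 - ε₀) := by
  unfold NseqExponent
  split_ifs with hk1
  · obtain rfl : k = 1 := le_antisymm hk1 hk
    have : 2 - ε₀ ≠ 0 := by linarith
    rw [sub_self, zpow_zero, zpow_one]
    field_simp
    ring
  · rfl

lemma NseqExponent_sub_pred_mem_Icc (hε : 0 < ε₀) (hε1 : ε₀ < 1) {k : ℤ} (hk : k ≤ J + 1) :
    NseqExponent ε₀ J k - NseqExponent ε₀ J (k - 1) ∈ Set.Icc 0 ((1 - ε₀) ^ |k - 1|) := by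
  have h1ε : (1 - ε₀) ≠ 0 := by linarith
  have hpos : 0 < 2 - ε₀ := by linarith
  obtain ⟨c, ⟨hc0, hc1⟩, hdiff⟩ : ∃ c ∈ Set.Icc (0 : ℝ) 1,
      NseqExponent ε₀ J k - NseqExponent ε₀ J (k - 1) = (1 - ε₀) ^ |k - 1| * c := by
    have hsmall : ε₀ / (2 - ε₀) ∈ Set.Icc (0 : ℝ) 1 :=
      ⟨by positivity, (div_le_one hpos).mpr (by linarith)⟩
    rcases le_or_gt k 1 with hk1 | hk1
    · refine ⟨_, hsmall, ?_⟩
      rw [abs_of_nonpos (by omega), neg_sub, NseqExponent, NseqExponent, if_pos hk1,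
        if_pos (by omega), show 1 - (k - 1) = (1 - k) + 1 by ring, zpow_add_one₀ h1ε]
      field_simp
      ring
    have hpred := NseqExponent_of_one_le (J := J) hε1 (k := k - 1) (by omega) (by omega)
    rw [hpred, abs_of_pos (by omega)]
    rcases le_or_gt k J with hkJ | hkJ
    · refine ⟨_, hsmall, ?_⟩
      have hstep : (1 - ε₀) ^ k = (1 - ε₀) ^ (k - 1) * (1 - ε₀) := by
        rw [← zpow_add_one₀ h1ε, sub_add_cancel]
      rw [NseqExponent_of_one_le hε1 (by omega) hkJ, hstep]
      field_simp
      ring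
    · refine ⟨1 / (2 - ε₀), ⟨by positivity, (div_le_one hpos).mpr (by linarith)⟩, ?_⟩
      rw [NseqExponent, if_neg (by omega), if_neg (by omega)]
      field_simp
      ring
  rw [hdiff]
  exact ⟨mul_nonneg (zpow_pos (by linarith) _).le hc0,
    mul_le_of_le_one_right (zpow_pos (by linarith) _).le hc1⟩

end NseqExponent

lemma log_Nseq_div_Ntil (ε₀ A : ℝ) {N : ℕ} (hN : 0 < N) {n : ℕ} (hn : 1 ≤ n) :
    Real.log (Nseq ε₀ A N ((n : ℤ) - Jdef ε₀ A N) / Ntil ε₀ A N (n - 1)) =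
      (NseqExponent ε₀ (Jdef ε₀ A N) (n - Jdef ε₀ A N) -
        if n = 1 then 0 else NseqExponent ε₀ (Jdef ε₀ A N) (n - 1 - Jdef ε₀ A N)) *
        Real.log N := by
  have hNseq : ∀ k, Nseq ε₀ A N k ≠ 0 := fun k ↦
    (Nseq_eq_rpow ε₀ A N k ▸ Real.rpow_pos_of_pos (by exact_mod_cast hN) _).ne'
  unfold Ntil
  split_ifs with h0 h1 h1
  · rw [div_one, log_Nseq ε₀ A hN, sub_zero]
  · omega
  · omega
  · rw [Real.log_div (hNseq _) (hNseq _), log_Nseq ε₀ A hN, log_Nseq ε₀ A hN, sub_mul,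
      Nat.cast_sub hn, Nat.cast_one]

lemma log_Nseq_div_Ntil_mem_Icc {ε₀ : ℝ} (hε : 0 < ε₀) (hε1 : ε₀ < 1) (A : ℝ) {N : ℕ}
    (hN : 0 < N) (hJ : 0 ≤ Jdef ε₀ A N) {n : ℕ} (hn : 1 ≤ n)
    (hnJ : (n : ℤ) ≤ 2 * Jdef ε₀ A N + 1) :
    Real.log (Nseq ε₀ A N ((n : ℤ) - Jdef ε₀ A N) / Ntil ε₀ A N (n - 1)) ∈
      Set.Icc 0 ((1 - ε₀) ^ |(n : ℤ) - Jdef ε₀ A N - 1| * Real.log N) := by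
  set J := Jdef ε₀ A N
  have hexp : NseqExponent ε₀ J (n - J) -
      (if n = 1 then 0 else NseqExponent ε₀ J (n - 1 - J)) ∈
        Set.Icc 0 ((1 - ε₀) ^ |(n : ℤ) - J - 1|) := by
    split_ifs with h1
    · subst h1
      rw [NseqExponent, if_pos (by omega), Nat.cast_one, sub_sub_cancel, sub_zero,
        show (1 : ℤ) - J - 1 = -J by ring, abs_neg, abs_of_nonneg hJ]
      exact ⟨div_nonneg (zpow_pos (by linarith) _).le (by linarith),
        div_le_self (zpow_pos (by linarith) _).le (by linarith)⟩
    · rw [sub_right_comm (n : ℤ) 1 J]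
      exact NseqExponent_sub_pred_mem_Icc hε hε1 (by omega)
  have hL : 0 ≤ Real.log N := Real.log_natCast_nonneg N
  rw [log_Nseq_div_Ntil ε₀ A hN hn]
  exact ⟨mul_nonneg hexp.1 hL, mul_le_mul_of_nonneg_right hexp.2 hL⟩

lemma pow_div_sq_le_one_sub_zpow_Jdef_mul_log {ε₀ A : ℝ} (hε : 0 < ε₀) (hε1 : ε₀ < 1)
    (hA : 1 ≤ 10 * A) {N : ℕ} (hJ : 0 < Jdef ε₀ A N) :
    (10 * A) ^ 4 / ε₀ ^ 2 ≤ (1 - ε₀) ^ Jdef ε₀ A N * Real.log N := by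
  set J := Jdef ε₀ A N
  have hlog1ε : Real.log (1 - ε₀) < 0 := Real.log_neg (by linarith) (by linarith)
  have hfloor : 4 * Real.log (10 * A) - 2 * Real.log ε₀ ≤
      J * Real.log (1 - ε₀) + Real.log (Real.log N) := by
    have h : (J : ℝ) * -Real.log (1 - ε₀) ≤
        Real.log (Real.log N) - 4 * Real.log (10 * A) + 2 * Real.log ε₀ :=
      (le_div_iff₀ (neg_pos.mpr hlog1ε)).mp (Int.floor_le _)
    linarith
  have hlhs : 0 < 4 * Real.log (10 * A) - 2 * Real.log ε₀ := by
    have := Real.log_nonneg hA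
    have := Real.log_neg hε hε1
    linarith
  have hJlog : (J : ℝ) * Real.log (1 - ε₀) < 0 :=
    mul_neg_of_pos_of_neg (by exact_mod_cast hJ) hlog1ε
  have hL : 0 < Real.log N := by
    by_contra! hL
    have := Real.log_nonpos (Real.log_natCast_nonneg N) (by linarith)
    linarith
  rw [← Real.log_le_log_iff (by positivity) (by positivity), Real.log_div (by positivity)
    (by positivity), Real.log_mul (by positivity) hL.ne', Real.log_pow, Real.log_pow,
    Real.log_zpow]
  push_cast
  linarith

lemma j0_le_abs {ε₀ A : ℝ} {N j h n : ℕ} (hjn : j + 1 ≤ n) (hnh : n ≤ h) :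
    j0 ε₀ A N j h ≤ |(n : ℤ) - Jdef ε₀ A N - 1| :=
  csInf_le ⟨0, fun _ ⟨_, _, _, hm⟩ ↦ hm ▸ abs_nonneg _⟩ ⟨n, hjn, hnh, rfl⟩

lemma j0_le_Jdef {ε₀ A : ℝ} {N j h : ℕ} (hjh : j < h) (hh : (h : ℤ) ≤ 2 * Jdef ε₀ A N + 1) :
    j0 ε₀ A N j h ≤ Jdef ε₀ A N := by
  refine (j0_le_abs le_rfl hjh).trans (abs_le.mpr ⟨?_, ?_⟩) <;> push_cast <;> omega

lemma two_pow_nine_mul_pow_three_mul_le_rpow {A B : ℝ} (hA : 0 ≤ A) (hB : (10 * A) ^ 4 ≤ B) :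
    2 ^ 9 * A ^ 3 * B ≤ B ^ (7 / 4 : ℝ) := by
  have hB0 : 0 ≤ B := (by positivity : (0 : ℝ) ≤ (10 * A) ^ 4).trans hB
  have hroot : ((10 * A) ^ 4) ^ (3 / 4 : ℝ) = (10 * A) ^ 3 := by
    rw [← Real.rpow_natCast _ 4, ← Real.rpow_mul (by positivity), ← Real.rpow_natCast]
    norm_num
  calc 2 ^ 9 * A ^ 3 * B ≤ (10 * A) ^ 3 * B := by
        gcongr
        rw [mul_pow]
        nlinarith [pow_nonneg hA 3]
    _ ≤ B ^ (3 / 4 : ℝ) * B := by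
        gcongr
        exact hroot ▸ Real.rpow_le_rpow (by positivity) hB (by norm_num)
    _ = B ^ (7 / 4 : ℝ) := by
        rw [← Real.rpow_add_one' hB0 (by norm_num)]
        norm_num

lemma prod_Icc_le_rpow_mul {f : ℕ → ℝ} {B a : ℝ} {j h : ℕ} (hjh : j ≤ h) (hB : 0 ≤ B)
    (hf : ∀ n ∈ Finset.Icc (j + 1) h, 0 ≤ f n ∧ f n ≤ B ^ a) :
    ∏ n ∈ Finset.Icc (j + 1) h, f n ≤ B ^ (a * ((h : ℝ) - j)) := by
  calc ∏ n ∈ Finset.Icc (j + 1) h, f n ≤ ∏ _n ∈ Finset.Icc (j + 1) h, B ^ a :=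
        Finset.prod_le_prod (fun n hn ↦ (hf n hn).1) (fun n hn ↦ (hf n hn).2)
    _ = B ^ (a * ((h : ℝ) - j)) := by
        rw [Finset.prod_const, Nat.card_Icc, ← Real.rpow_natCast, ← Real.rpow_mul hB,
          Nat.cast_sub (by omega)]
        push_cast
        ring_nf

theorem product_of_logs_bound
    (ε₀ A : ℝ) (hε : 0 < ε₀) (hε' : ε₀ < 1/2500) (hA : 2 ≤ A)
    (N : ℕ) (hJ : 10 ≤ Jdef ε₀ A N)
    (j h : ℕ) (hjh : j < h) (hh : (h : ℤ) ≤ 2 * Jdef ε₀ A N + 1) :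
    ∏ n ∈ Finset.Icc (j+1) h,
        (2^9 * A^3 * Real.log (Nseq ε₀ A N ((n : ℤ) - Jdef ε₀ A N) / Ntil ε₀ A N (n-1))) ≤
      ((1 - ε₀) ^ (j0 ε₀ A N j h) * Real.log N) ^ ((7/4 : ℝ) * ((h : ℝ) - (j : ℝ))) := by
  have hε1 : ε₀ < 1 := by linarith
  have h1ε : 0 < 1 - ε₀ := by linarith
  have hlarge := pow_div_sq_le_one_sub_zpow_Jdef_mul_log hε hε1 (by linarith)
    (by omega : 0 < Jdef ε₀ A N)
  have hL : 0 < Real.log N := pos_of_mul_pos_right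
    ((by positivity : (0 : ℝ) < (10 * A) ^ 4 / ε₀ ^ 2).trans_le hlarge) (zpow_pos h1ε _).le
  have hN : 0 < N := Nat.pos_of_ne_zero (by rintro rfl; simp at hL)
  set B := (1 - ε₀) ^ (j0 ε₀ A N j h) * Real.log N
  have hB : (10 * A) ^ 4 ≤ B := calc
    (10 * A) ^ 4 ≤ (10 * A) ^ 4 / ε₀ ^ 2 :=
      le_div_self (by positivity) (by positivity) (pow_le_one₀ hε.le hε1.le)
    _ ≤ (1 - ε₀) ^ Jdef ε₀ A N * Real.log N := hlarge
    _ ≤ B := mul_le_mul_of_nonneg_right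
      (zpow_le_zpow_right_of_le_one₀ h1ε (by linarith) (j0_le_Jdef hjh hh)) hL.le
  refine prod_Icc_le_rpow_mul hjh.le ((by positivity : (0 : ℝ) ≤ (10 * A) ^ 4).trans hB)
    fun n hn ↦ ?_
  obtain ⟨hjn, hnh⟩ := Finset.mem_Icc.mp hn
  obtain ⟨hlog0, hlog⟩ := log_Nseq_div_Ntil_mem_Icc hε hε1 A hN (by omega) (by omega)
    (by omega : (n : ℤ) ≤ _)
  have hlogB := hlog.trans <| mul_le_mul_of_nonneg_right
    (zpow_le_zpow_right_of_le_one₀ h1ε (by linarith) (j0_le_abs hjn hnh)) hL.le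
  exact ⟨mul_nonneg (by positivity) hlog0, (mul_le_mul_of_nonneg_left hlogB (by positivity)).trans
    (two_pow_nine_mul_pow_three_mul_le_rpow (by linarith) hB)⟩
end
end

section
/- Let ε₀ ∈ (0, 1/2500), let A ≥ 2 be a real number, and let N be an integer large enough that J ≥ 10. Suppose L₁,…,L_{2J+1} are real numbers satisfying L_j ≥ N_{j−J}/(100·A²·N_{j−J−1}) for every 1 ≤ j ≤ 2J+1. Then ∑_{n=1}^{2J+1} 1/log L_n ≤ 1/16000. -/
/-! Write `q = 1 - ε₀`. Each ratio `N_j / N_{j-1}` is `N ^ (ε₀ q ^ |j - 1| / (2 - ε₀))`, or larger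
at `j = J + 1`, so `log L_n ≥ ε₀ q ^ k log N / 2 - log (100 A²)` with `k = |n - J - 1| ≤ J`.
The choice of `J` makes `q ^ J log N ≥ (10 A)⁴ / ε₀²`, which absorbs `log (100 A²)` and leaves
`log L_n ≥ (9/20) ε₀ q ^ k log N`. The reciprocals form a geometric series in `q⁻¹` on both sides of
the centre, so the sum is at most `40 / (9 ε₀² q ^ J log N) ≤ 40 / (9 (10 A)⁴) < 1 / 16000`. -/

open Real

noncomputable section

open Finset

lemma sum_Icc_natAbs_sub_le {f : ℕ → ℝ} (hf : ∀ i, 0 ≤ f i) (m : ℕ) :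
    ∑ n ∈ Icc 1 (2 * m + 1), f ((n : ℤ) - m - 1).natAbs ≤ 2 * ∑ i ∈ range (m + 1), f i := by
  rw [← sum_fiberwise_of_maps_to (g := fun n : ℕ => ((n : ℤ) - m - 1).natAbs)
    (t := range (m + 1)) (fun n hn => by simp only [mem_Icc, mem_range] at hn ⊢; omega), mul_sum]
  refine sum_le_sum fun i _ => ?_
  rw [sum_congr rfl fun n hn => congrArg f (mem_filter.1 hn).2, sum_const, nsmul_eq_mul]
  have hfiber : (Icc 1 (2 * m + 1)).filter (fun n : ℕ => ((n : ℤ) - m - 1).natAbs = i) ⊆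
      {m + 1 - i, m + 1 + i} :=
    fun n hn => by simp only [mem_filter, mem_Icc, mem_insert, mem_singleton] at hn ⊢; omega
  gcongr
  · exact hf i
  · exact_mod_cast (card_le_card hfiber).trans card_le_two

lemma sum_range_inv_pow_le {q : ℝ} (hq0 : 0 < q) (hq1 : q < 1) (m : ℕ) :
    ∑ i ∈ range (m + 1), (q ^ i)⁻¹ ≤ (q ^ m)⁻¹ / (1 - q) := by
  have hreflect : ∑ i ∈ range (m + 1), (q ^ i)⁻¹ = (∑ i ∈ range (m + 1), q ^ i) / q ^ m := by
    rw [← sum_range_reflect, sum_div]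
    refine sum_congr rfl fun i hi => ?_
    rw [Nat.add_sub_cancel, ← pow_sub_mul_pow q (Nat.le_of_lt_succ (mem_range.1 hi))]
    field_simp
  have hgeom : ∑ i ∈ range (m + 1), q ^ i ≤ 1 / (1 - q) := by
    have := geom_sum_Ico_le_of_lt_one (m := 0) (n := m + 1) hq0.le hq1
    rwa [← range_eq_Ico, pow_zero] at this
  calc ∑ i ∈ range (m + 1), (q ^ i)⁻¹ ≤ 1 / (1 - q) / q ^ m := by
        rw [hreflect]; gcongr
    _ = (q ^ m)⁻¹ / (1 - q) := by ring

lemma nine_twentieths_mul_log_le {ε₀ A b e L : ℝ} (hε : 0 < ε₀) (hε' : ε₀ ≤ 1 / 2500)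
    (hA : 1 ≤ A) (hb : 0 < b) (he : (10 * A) ^ 4 / ε₀ ≤ e * log b)
    (hL : b ^ (e / (2 - ε₀)) / (100 * A ^ 2) ≤ L) :
    9 / 20 * (e * log b) ≤ log L := by
  have hT : 0 < e * log b := lt_of_lt_of_le (by positivity) he
  have hlogL : e / (2 - ε₀) * log b - log (100 * A ^ 2) ≤ log L := by
    have := log_le_log (by positivity) hL
    rwa [log_div (by positivity) (by positivity), log_rpow hb] at this
  have hsmall : 20 * log (100 * A ^ 2) ≤ (10 * A) ^ 4 / ε₀ := by
    have hlog := log_nonneg (by nlinarith : (1 : ℝ) ≤ 100 * A ^ 2)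
    rw [le_div_iff₀ hε]
    calc 20 * log (100 * A ^ 2) * ε₀ ≤ 20 * (100 * A ^ 2) * (1 / 2500) := by
          gcongr; exact log_le_self (by positivity)
      _ ≤ (10 * A) ^ 4 := by nlinarith [one_le_pow₀ (n := 2) hA]
  have hhalf : e * log b / 2 ≤ e / (2 - ε₀) * log b := by
    rw [div_mul_eq_mul_div]
    gcongr <;> linarith
  linarith

section Nseq

variable {ε₀ A : ℝ} {N : ℕ} {j : ℤ}

lemma Nseq_of_le_one (h : j ≤ 1) :
    Nseq ε₀ A N j = (N : ℝ) ^ ((1 - ε₀) ^ (1 - j) / (2 - ε₀)) :=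
  if_pos h

lemma Nseq_of_one_le_of_le_Jdef (hε : ε₀ < 1) (h1 : 1 ≤ j) (hJ : j ≤ Jdef ε₀ A N) :
    Nseq ε₀ A N j = (N : ℝ) ^ (1 - (1 - ε₀) ^ j / (2 - ε₀)) := by
  rcases h1.eq_or_lt with rfl | h1
  · have : 2 - ε₀ ≠ 0 := by linarith
    rw [Nseq_of_le_one le_rfl, sub_self, zpow_zero, zpow_one]
    congr 1
    field_simp
    ring
  · rw [Nseq, if_neg (by omega), if_pos hJ]

lemma Nseq_of_Jdef_lt (h1 : 1 < j) (hJ : Jdef ε₀ A N < j) : Nseq ε₀ A N j = N := by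
  rw [Nseq, if_neg (by omega), if_neg (by omega)]

lemma rpow_le_Nseq_div_Nseq_sub_one (hε : ε₀ < 1) (hN : 1 ≤ (N : ℝ))
    (hj : j ≤ Jdef ε₀ A N + 1) :
    (N : ℝ) ^ (ε₀ * (1 - ε₀) ^ (j - 1).natAbs / (2 - ε₀)) ≤
      Nseq ε₀ A N j / Nseq ε₀ A N (j - 1) := by
  have hN0 : (0 : ℝ) < N := by linarith
  have h2ε : 0 < 2 - ε₀ := by linarith
  rcases le_or_gt j 1 with h1 | h1
  · obtain ⟨m, hm⟩ : ∃ m : ℕ, 1 - j = m := ⟨(1 - j).toNat, by omega⟩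
    rw [Nseq_of_le_one h1, Nseq_of_le_one (by omega), ← rpow_sub hN0,
      show 1 - (j - 1) = (m : ℤ) + 1 by omega, hm, show (j - 1).natAbs = m by omega,
      zpow_add_one₀ (by linarith), zpow_natCast]
    exact rpow_le_rpow_of_exponent_le hN (le_of_eq (by ring))
  obtain ⟨m, hm⟩ : ∃ m : ℕ, j - 1 = m := ⟨(j - 1).toNat, by omega⟩
  rcases le_or_gt j (Jdef ε₀ A N) with hJ | hJ
  · rw [Nseq_of_one_le_of_le_Jdef hε h1.le hJ, Nseq_of_one_le_of_le_Jdef hε (by omega) (by omega),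
      ← rpow_sub hN0, show j = (m : ℤ) + 1 by omega, add_sub_cancel_right, Int.natAbs_natCast,
      zpow_add_one₀ (by linarith), zpow_natCast]
    exact rpow_le_rpow_of_exponent_le hN (le_of_eq (by ring))
  · rw [Nseq_of_Jdef_lt h1 hJ, Nseq_of_one_le_of_le_Jdef hε (by omega) (by omega), hm,
      Int.natAbs_natCast, zpow_natCast]
    have hq : 0 < (1 - ε₀) ^ m := pow_pos (by linarith) m
    rw [← rpow_one_sub' hN0.le (by rw [sub_sub_cancel]; exact (div_pos hq h2ε).ne'), sub_sub_cancel]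
    refine rpow_le_rpow_of_exponent_le hN ?_
    gcongr
    exact mul_le_of_le_one_left hq.le hε.le

end Nseq

section Jdef

variable {ε₀ A : ℝ} {N J : ℕ}

lemma log_natCast_pos_of_Jdef_nonneg (hε : 0 < ε₀) (hε1 : ε₀ < 1) (hA : 1 ≤ 10 * A)
    (hJ : 0 ≤ Jdef ε₀ A N) : 0 < log N := by
  refine (log_natCast_nonneg N).lt_of_ne' fun hlogN => ?_
  have hfloor := Int.floor_nonneg.1 hJ
  rw [hlogN, log_zero, div_nonneg_iff] at hfloor
  have := log_nonneg hA
  have := log_neg hε hε1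
  have := log_neg (by linarith : 0 < 1 - ε₀) (by linarith)
  rcases hfloor with h | h <;> linarith [h.1, h.2]

lemma div_sq_le_pow_mul_log_of_Jdef_eq (hε : 0 < ε₀) (hε1 : ε₀ < 1) (hA : 1 ≤ 10 * A)
    (hJ : Jdef ε₀ A N = J) : (10 * A) ^ 4 / ε₀ ^ 2 ≤ (1 - ε₀) ^ J * log N := by
  have hlogN := log_natCast_pos_of_Jdef_nonneg hε hε1 hA (hJ ▸ J.cast_nonneg)
  have hfloor : J * -log (1 - ε₀) ≤ log (log N) - 4 * log (10 * A) + 2 * log ε₀ := by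
    rw [← le_div_iff₀ (neg_pos.2 (log_neg (by linarith) (by linarith)))]
    have h : ((Jdef ε₀ A N : ℤ) : ℝ) ≤
        (log (log N) - 4 * log (10 * A) + 2 * log ε₀) / -log (1 - ε₀) := Int.floor_le _
    rwa [hJ, Int.cast_natCast] at h
  rw [← log_le_log_iff (by positivity) (by positivity), log_div (by positivity) (by positivity),
    log_mul (by positivity) hlogN.ne', log_pow, log_pow, log_pow]
  push_cast
  linarith

end Jdef

lemma one_div_log_le_of_Nseq_div_le {ε₀ A L : ℝ} {N J : ℕ} {j : ℤ} (hε : 0 < ε₀)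
    (hε' : ε₀ ≤ 1 / 2500) (hA : 1 ≤ A) (hJ : Jdef ε₀ A N = J) (hj1 : 1 - (J : ℤ) ≤ j)
    (hj2 : j ≤ J + 1) (hL : Nseq ε₀ A N j / (100 * A ^ 2 * Nseq ε₀ A N (j - 1)) ≤ L) :
    1 / log L ≤ 20 / (9 * ε₀ * log N) * ((1 - ε₀) ^ (j - 1).natAbs)⁻¹ := by
  have hε1 : ε₀ < 1 := by linarith
  have hlogN := log_natCast_pos_of_Jdef_nonneg hε hε1 (by linarith) (hJ ▸ J.cast_nonneg)
  have hN0 : (0 : ℝ) < N := by exact_mod_cast Nat.pos_of_ne_zero (by rintro rfl; simp at hlogN)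
  have hN : (1 : ℝ) ≤ N := ((log_pos_iff hN0.le).1 hlogN).le
  set k := (j - 1).natAbs
  have he : (10 * A) ^ 4 / ε₀ ≤ ε₀ * (1 - ε₀) ^ k * log N := by
    have hkey := div_sq_le_pow_mul_log_of_Jdef_eq hε hε1 (by linarith) hJ
    have hqk : (1 - ε₀) ^ J ≤ (1 - ε₀) ^ k :=
      pow_le_pow_of_le_one (by linarith) (by linarith) (by omega)
    calc (10 * A) ^ 4 / ε₀ = ε₀ * ((10 * A) ^ 4 / ε₀ ^ 2) := by field_simp
      _ ≤ ε₀ * ((1 - ε₀) ^ k * log N) := by gcongr; exact hkey.trans (by gcongr)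
      _ = ε₀ * (1 - ε₀) ^ k * log N := by ring
  have hratio := rpow_le_Nseq_div_Nseq_sub_one (A := A) hε1 hN (hJ ▸ hj2)
  have hLb : (N : ℝ) ^ (ε₀ * (1 - ε₀) ^ k / (2 - ε₀)) / (100 * A ^ 2) ≤ L := by
    refine (div_le_div_of_nonneg_right hratio (by positivity)).trans ?_
    rwa [div_div, mul_comm (Nseq ε₀ A N (j - 1))]
  calc 1 / log L ≤ 1 / (9 / 20 * (ε₀ * (1 - ε₀) ^ k * log N)) :=
        one_div_le_one_div_of_le (by positivity) (nine_twentieths_mul_log_le hε hε' hA hN0 he hLb)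
    _ = 20 / (9 * ε₀ * log N) * ((1 - ε₀) ^ k)⁻¹ := by field_simp

theorem sum_reciprocal_log_L_bound
    (ε₀ A : ℝ) (hε : 0 < ε₀) (hε' : ε₀ < 1/2500) (hA : 2 ≤ A)
    (N : ℕ) (hJ : 10 ≤ Jdef ε₀ A N)
    (L : ℕ → ℝ)
    (hL : ∀ j : ℕ, 1 ≤ j → (j : ℤ) ≤ 2 * Jdef ε₀ A N + 1 →
      Nseq ε₀ A N ((j : ℤ) - Jdef ε₀ A N) /
          (100 * A^2 * Nseq ε₀ A N ((j : ℤ) - Jdef ε₀ A N - 1)) ≤ L j) :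
    ∑ n ∈ Finset.Icc 1 (2 * Jdef ε₀ A N + 1).toNat, 1 / Real.log (L n) ≤ 1/16000 := by
  have hε1 : ε₀ < 1 := by linarith
  obtain ⟨J, hJdef⟩ : ∃ J : ℕ, Jdef ε₀ A N = J := ⟨_, (Int.toNat_of_nonneg (by omega)).symm⟩
  have hkey := div_sq_le_pow_mul_log_of_Jdef_eq hε hε1 (by linarith) hJdef
  have hterm : ∀ n ∈ Icc 1 (2 * J + 1), 1 / log (L n) ≤
      20 / (9 * ε₀ * log N) * ((1 - ε₀) ^ ((n : ℤ) - J - 1).natAbs)⁻¹ := fun n hn => by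
    rw [mem_Icc] at hn
    exact one_div_log_le_of_Nseq_div_le hε hε'.le (by linarith) hJdef (by omega) (by omega)
      (hJdef ▸ hL n hn.1 (by omega))
  rw [hJdef, show (2 * (J : ℤ) + 1).toNat = 2 * J + 1 by omega]
  calc ∑ n ∈ Icc 1 (2 * J + 1), 1 / log (L n)
      ≤ ∑ n ∈ Icc 1 (2 * J + 1), 20 / (9 * ε₀ * log N) * ((1 - ε₀) ^ ((n : ℤ) - J - 1).natAbs)⁻¹ :=
        sum_le_sum hterm
    _ ≤ 20 / (9 * ε₀ * log N) * (2 * ∑ i ∈ range (J + 1), ((1 - ε₀) ^ i)⁻¹) := by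
        rw [← mul_sum]
        gcongr
        exact sum_Icc_natAbs_sub_le (fun i => inv_nonneg.2 (pow_nonneg (by linarith) i)) J
    _ ≤ 20 / (9 * ε₀ * log N) * (2 * (((1 - ε₀) ^ J)⁻¹ / ε₀)) := by
        gcongr
        simpa using sum_range_inv_pow_le (by linarith) (by linarith : 1 - ε₀ < 1) J
    _ = 40 / (9 * (ε₀ ^ 2 * ((1 - ε₀) ^ J * log N))) := by field_simp; ring
    _ ≤ 40 / (9 * (10 * A) ^ 4) := by
        gcongr
        exact (div_le_iff₀' (by positivity)).1 hkey
    _ ≤ 1 / 16000 := by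
        rw [div_le_div_iff₀ (by positivity) (by norm_num)]
        nlinarith [pow_le_pow_left₀ (by norm_num) (by linarith : (20 : ℝ) ≤ 10 * A) 4]

end
end

section
/- Let W be a finite set with #W > 10, let f : W → [0,∞), and let C₁ ≥ 0 be a real number such that for every subset Z ⊆ W one has ∑_{θ∈Z} f(θ) ≤ C₁·(#Z)^{1/2}. Then ∑_{θ∈W} f(θ)² ≤ 8·C₁²·log(#W). -/
open Real Finset

/-!
Let `θ₀` minimise `f` on `W` and `n = #W`. Comparing with the hypothesis for `Z = W` gives
`n f(θ₀) ≤ ∑_W f ≤ C₁ √n`, i.e. `f(θ₀)² ≤ C₁² / n`. Removing `θ₀` and inducting on `n` yields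
`∑_W f² ≤ C₁² Hₙ`, and the harmonic number satisfies `Hₙ ≤ 1 + log n ≤ 2 log n` once `n ≥ 3 > e`.
-/

lemma sq_le_sq_div_of_mul_le_mul_sqrt {n : ℕ} {a C : ℝ} (hn : 0 < n) (ha : 0 ≤ a)
    (h : n * a ≤ C * √n) : a ^ 2 ≤ C ^ 2 / n := by
  have hn' : (0 : ℝ) < n := by exact_mod_cast hn
  have hsq : (n * a) ^ 2 ≤ (C * √n) ^ 2 := pow_le_pow_left₀ (by positivity) h 2
  rw [mul_pow, mul_pow, sq_sqrt hn'.le] at hsq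
  rw [le_div_iff₀ hn']
  nlinarith

theorem sum_sq_le_sq_mul_harmonic {ι : Type*} (W : Finset ι) (f : ι → ℝ)
    (hf : ∀ θ ∈ W, 0 ≤ f θ) (C : ℝ) (hsum : ∀ Z ⊆ W, ∑ θ ∈ Z, f θ ≤ C * √(#Z : ℝ)) :
    ∑ θ ∈ W, f θ ^ 2 ≤ C ^ 2 * harmonic #W := by
  classical
  induction hcard : #W generalizing W with
  | zero => simp [card_eq_zero.mp hcard]
  | succ n ih =>
    obtain ⟨θ₀, hθ₀, hmin⟩ := W.exists_min_image f (card_pos.mp (by omega))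
    have hθ₀_sq : f θ₀ ^ 2 ≤ C ^ 2 / (n + 1 : ℕ) := by
      refine sq_le_sq_div_of_mul_le_mul_sqrt n.succ_pos (hf θ₀ hθ₀) ?_
      rw [← hcard, ← nsmul_eq_mul]
      exact (card_nsmul_le_sum W f (f θ₀) hmin).trans (hsum W subset_rfl)
    have hrest : ∑ θ ∈ W.erase θ₀, f θ ^ 2 ≤ C ^ 2 * harmonic n := by
      have hsub := erase_subset θ₀ W
      refine ih _ (fun θ hθ => hf θ (hsub hθ)) (fun Z hZ => hsum Z (hZ.trans hsub)) ?_
      rw [card_erase_of_mem hθ₀, hcard, Nat.add_sub_cancel]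
    calc ∑ θ ∈ W, f θ ^ 2 = f θ₀ ^ 2 + ∑ θ ∈ W.erase θ₀, f θ ^ 2 := (add_sum_erase W _ hθ₀).symm
      _ ≤ C ^ 2 / (n + 1 : ℕ) + C ^ 2 * harmonic n := add_le_add hθ₀_sq hrest
      _ = C ^ 2 * harmonic (n + 1) := by
        rw [harmonic_succ]
        push_cast
        ring

lemma harmonic_le_two_mul_log {n : ℕ} (hn : 3 ≤ n) : (harmonic n : ℝ) ≤ 2 * log n := by
  have hlog : 1 ≤ log n := by
    rw [le_log_iff_exp_le (by positivity)]
    exact exp_one_lt_three.le.trans (by exact_mod_cast hn)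
  linarith [harmonic_le_one_add_log n]

theorem sum_sq_of_sum_bound_general
    {ι : Type*} (W : Finset ι) (hW : 10 < W.card)
    (f : ι → ℝ) (hf : ∀ θ ∈ W, 0 ≤ f θ)
    (C₁ : ℝ)
    (hsum : ∀ Z ⊆ W, ∑ θ ∈ Z, f θ ≤ C₁ * Real.sqrt (Z.card : ℝ)) :
    ∑ θ ∈ W, (f θ)^2 ≤ 8 * C₁^2 * Real.log (W.card : ℝ) := by
  have hlog : 0 ≤ log (#W : ℝ) := log_natCast_nonneg _
  calc ∑ θ ∈ W, f θ ^ 2 ≤ C₁ ^ 2 * harmonic #W := sum_sq_le_sq_mul_harmonic W f hf C₁ hsum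
    _ ≤ C₁ ^ 2 * (2 * log #W) := by gcongr; exact harmonic_le_two_mul_log (by omega)
    _ ≤ 8 * C₁ ^ 2 * log #W := by nlinarith [sq_nonneg C₁]

theorem sum_sq_of_sum_bound
    {ι : Type*} (W : Finset ι) (hW : 10 < W.card)
    (f : ι → ℝ) (hf : ∀ θ ∈ W, 0 ≤ f θ)
    (C₁ : ℝ) (hC₁ : 0 ≤ C₁)
    (hsum : ∀ Z ⊆ W, ∑ θ ∈ Z, f θ ≤ C₁ * Real.sqrt (Z.card : ℝ)) :
    ∑ θ ∈ W, (f θ)^2 ≤ 8 * C₁^2 * Real.log (W.card : ℝ) :=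
  sum_sq_of_sum_bound_general W hW f hf C₁ hsum
end

section
/- Let Q ≥ 1 and let a₁, q₁, a₂, q₂ be positive integers with 1 ≤ a_i ≤ q_i ≤ Q, gcd(a_i, q_i) = 1 for i = 1, 2, and a₁/q₁ ≠ a₂/q₂. Let 0 < Y₁ ≤ Y be real numbers and let R be a real number with R > max{Q²/Y₁, 4Y, 2Q}. Then there do not exist coprime positive integers y₁, y₂ with Y₁ ≤ y_i ≤ Y and ‖y_i·(a₁/q₁ − a₂/q₂)‖ < 1/R for i = 1, 2. -/
open Real

noncomputable section

/-- `‖x‖`: the distance from the real number `x` to the nearest integer. -/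
def dni (x : ℝ) : ℝ := |x - round x|

/-
Write θ = a₁/q₁ - a₂/q₂. It is a non-integer with denominator q₁q₂ ≤ Q², so ‖θ‖ ≥ 1/Q².
If ‖y₁θ‖, ‖y₂θ‖ < 1/R with y₁, y₂ ≤ Y < R/4, the integer y₂·round(y₁θ) - y₁·round(y₂θ) has
absolute value < 1, hence vanishes; by coprimality y₁ ∣ round(y₁θ), and then
‖y₁θ‖ ≥ y₁‖θ‖ ≥ Y₁/Q² > 1/R, a contradiction.
-/

theorem one_div_le_dni_of_mul_eq_intCast {x : ℝ} {d : ℕ} {n : ℤ} (hd : 0 < d)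
    (hn : x * d = n) (hx : ∀ k : ℤ, x ≠ k) : 1 / (d : ℝ) ≤ dni x := by
  have hd' : (0 : ℝ) < d := by exact_mod_cast hd
  have hnum : n - round x * (d : ℤ) ≠ 0 := by
    intro h
    apply hx (round x)
    rw [← mul_left_inj' hd'.ne', hn]
    exact_mod_cast sub_eq_zero.mp h
  have hone : (1 : ℝ) ≤ |((n - round x * (d : ℤ) : ℤ) : ℝ)| := by
    exact_mod_cast Int.one_le_abs hnum
  have hdiff : x - round x = ((n - round x * (d : ℤ) : ℤ) : ℝ) / d := by
    rw [eq_div_iff hd'.ne']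
    push_cast
    rw [← hn]
    ring
  rw [dni, hdiff, abs_div, abs_of_pos hd']
  gcongr

theorem mul_round_mul_eq_of_dni_lt {θ : ℝ} {y₁ y₂ : ℤ}
    (h : |(y₁ : ℝ)| * dni (y₂ * θ) + |(y₂ : ℝ)| * dni (y₁ * θ) < 1) :
    y₂ * round (y₁ * θ) = y₁ * round (y₂ * θ) := by
  rw [← sub_eq_zero, ← Int.abs_lt_one_iff, ← Int.cast_lt (R := ℝ), Int.cast_abs, Int.cast_one]
  have hsplit : (((y₂ * round (y₁ * θ) - y₁ * round (y₂ * θ) : ℤ)) : ℝ)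
      = y₁ * (y₂ * θ - round (y₂ * θ)) - y₂ * (y₁ * θ - round (y₁ * θ)) := by
    push_cast
    ring
  calc |(((y₂ * round (y₁ * θ) - y₁ * round (y₂ * θ) : ℤ)) : ℝ)|
      ≤ |y₁ * (y₂ * θ - round (y₂ * θ))| + |y₂ * (y₁ * θ - round (y₁ * θ))| := by
        rw [hsplit]
        exact abs_sub _ _
    _ = |(y₁ : ℝ)| * dni (y₂ * θ) + |(y₂ : ℝ)| * dni (y₁ * θ) := by
        rw [abs_mul, abs_mul, dni, dni]
    _ < 1 := h

theorem abs_mul_dni_le_dni_mul_of_dvd_round {θ : ℝ} {y : ℤ} (h : y ∣ round (y * θ)) :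
    |(y : ℝ)| * dni θ ≤ dni (y * θ) := by
  obtain ⟨k, hk⟩ := h
  calc |(y : ℝ)| * dni θ ≤ |(y : ℝ)| * |θ - k| := by
        gcongr
        exact round_le θ k
    _ = dni (y * θ) := by
        rw [dni, hk, ← abs_mul]
        push_cast
        ring_nf

theorem mul_dni_le_dni_mul_of_coprime {θ Y ε : ℝ} {y₁ y₂ : ℕ} (hcop : Nat.Coprime y₁ y₂)
    (hy₁ : (y₁ : ℝ) ≤ Y) (hy₂ : (y₂ : ℝ) ≤ Y) (h₁ : dni (y₁ * θ) ≤ ε) (h₂ : dni (y₂ * θ) ≤ ε)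
    (hε : 2 * Y * ε < 1) :
    y₁ * dni θ ≤ dni (y₁ * θ) := by
  have hY : 0 ≤ Y := (Nat.cast_nonneg _).trans hy₁
  have hround : (y₂ : ℤ) * round ((y₁ : ℤ) * θ) = y₁ * round ((y₂ : ℤ) * θ) := by
    apply mul_round_mul_eq_of_dni_lt
    simp only [Int.cast_natCast, Nat.abs_cast]
    have h₁₂ : (y₁ : ℝ) * dni (y₂ * θ) ≤ Y * ε := mul_le_mul hy₁ h₂ (abs_nonneg _) hY
    have h₂₁ : (y₂ : ℝ) * dni (y₁ * θ) ≤ Y * ε := mul_le_mul hy₂ h₁ (abs_nonneg _) hY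
    linarith
  have hdvd : (y₁ : ℤ) ∣ round ((y₁ : ℤ) * θ) :=
    (Nat.isCoprime_iff_coprime.mpr hcop).dvd_of_dvd_mul_left ⟨_, hround⟩
  simpa only [Int.cast_natCast, Nat.abs_cast] using abs_mul_dni_le_dni_mul_of_dvd_round hdvd

theorem div_sub_div_ne_intCast {a₁ q₁ a₂ q₂ : ℕ} (ha₁ : 1 ≤ a₁) (ha₂ : 1 ≤ a₂)
    (haq₁ : a₁ ≤ q₁) (haq₂ : a₂ ≤ q₂) (hne : (a₁ : ℝ) / q₁ ≠ (a₂ : ℝ) / q₂) (k : ℤ) :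
    (a₁ : ℝ) / q₁ - (a₂ : ℝ) / q₂ ≠ k := by
  have hunit {a q : ℕ} (ha : 1 ≤ a) (haq : a ≤ q) : 0 < (a : ℝ) / q ∧ (a : ℝ) / q ≤ 1 := by
    have hq : (0 : ℝ) < q := by exact_mod_cast ha.trans haq
    exact ⟨by positivity, (div_le_one hq).mpr (by exact_mod_cast haq)⟩
  obtain ⟨h₁, h₁'⟩ := hunit ha₁ haq₁
  obtain ⟨h₂, h₂'⟩ := hunit ha₂ haq₂
  intro hk
  have hk0 : k = 0 := by
    rw [← Int.abs_lt_one_iff, ← Int.cast_lt (R := ℝ), Int.cast_abs, ← hk, abs_lt]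
    constructor <;> linarith
  exact hne (sub_eq_zero.mp (by rw [hk, hk0, Int.cast_zero]))

theorem one_div_mul_le_dni_div_sub_div {a₁ q₁ a₂ q₂ : ℕ} (ha₁ : 1 ≤ a₁) (ha₂ : 1 ≤ a₂)
    (haq₁ : a₁ ≤ q₁) (haq₂ : a₂ ≤ q₂) (hne : (a₁ : ℝ) / q₁ ≠ (a₂ : ℝ) / q₂) :
    1 / ((q₁ : ℝ) * q₂) ≤ dni ((a₁ : ℝ) / q₁ - (a₂ : ℝ) / q₂) := by
  have hq₁ : (q₁ : ℝ) ≠ 0 := Nat.cast_ne_zero.mpr (by omega)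
  have hq₂ : (q₂ : ℝ) ≠ 0 := Nat.cast_ne_zero.mpr (by omega)
  exact_mod_cast one_div_le_dni_of_mul_eq_intCast (n := a₁ * q₂ - a₂ * q₁)
    (Nat.mul_pos (ha₁.trans haq₁) (ha₂.trans haq₂)) (by push_cast; field_simp)
    (div_sub_div_ne_intCast ha₁ ha₂ haq₁ haq₂ hne)

theorem no_coprime_pair_close_to_integers_general
    (Q : ℝ)
    (a₁ q₁ a₂ q₂ : ℕ)
    (ha₁ : 1 ≤ a₁) (ha₂ : 1 ≤ a₂)
    (haq₁ : a₁ ≤ q₁) (haq₂ : a₂ ≤ q₂)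
    (hq₁ : (q₁ : ℝ) ≤ Q) (hq₂ : (q₂ : ℝ) ≤ Q)
    (hne : (a₁ : ℝ) / q₁ ≠ (a₂ : ℝ) / q₂)
    (Y₁ Y R : ℝ) (hY₁ : 0 < Y₁)
    (hR : max (max (Q^2 / Y₁) (4 * Y)) (2 * Q) < R) :
    ¬ ∃ y₁ y₂ : ℕ, 0 < y₁ ∧ 0 < y₂ ∧ Nat.gcd y₁ y₂ = 1 ∧
        (Y₁ ≤ (y₁ : ℝ) ∧ (y₁ : ℝ) ≤ Y) ∧ (Y₁ ≤ (y₂ : ℝ) ∧ (y₂ : ℝ) ≤ Y) ∧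
        dni ((y₁ : ℝ) * ((a₁ : ℝ) / q₁ - (a₂ : ℝ) / q₂)) < 1 / R ∧
        dni ((y₂ : ℝ) * ((a₁ : ℝ) / q₁ - (a₂ : ℝ) / q₂)) < 1 / R := by
  rintro ⟨y₁, y₂, -, -, hcop, ⟨hY₁y₁, hy₁Y⟩, ⟨-, hy₂Y⟩, hd₁, hd₂⟩
  have hq₁0 : (0 : ℝ) < q₁ := Nat.cast_pos.mpr (ha₁.trans haq₁)
  have hq0 : (0 : ℝ) < q₁ * q₂ := mul_pos hq₁0 (Nat.cast_pos.mpr (ha₂.trans haq₂))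
  have hQ0 : 0 < Q := hq₁0.trans_le hq₁
  have hR₁ : Q ^ 2 / Y₁ < R := (le_max_left _ _).trans_lt ((le_max_left _ _).trans_lt hR)
  have hR₂ : 4 * Y < R := (le_max_right _ _).trans_lt ((le_max_left _ _).trans_lt hR)
  have hYR : 2 * Y * (1 / R) < 1 := by
    rw [mul_one_div, div_lt_one (by linarith [hY₁.trans_le (hY₁y₁.trans hy₁Y)])]
    linarith
  have hRQ : 1 / R < Y₁ / Q ^ 2 := by
    simpa only [one_div_div] using one_div_lt_one_div_of_lt (div_pos (pow_pos hQ0 2) hY₁) hR₁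
  have hqQ : (q₁ : ℝ) * q₂ ≤ Q ^ 2 := by
    rw [sq]
    exact mul_le_mul hq₁ hq₂ (Nat.cast_nonneg _) hQ0.le
  refine hd₁.not_ge ?_
  calc 1 / R ≤ Y₁ / Q ^ 2 := hRQ.le
    _ ≤ y₁ * (1 / ((q₁ : ℝ) * q₂)) := by rw [mul_one_div]; gcongr
    _ ≤ y₁ * dni ((a₁ : ℝ) / q₁ - (a₂ : ℝ) / q₂) := by
        gcongr
        exact one_div_mul_le_dni_div_sub_div ha₁ ha₂ haq₁ haq₂ hne
    _ ≤ dni (y₁ * ((a₁ : ℝ) / q₁ - (a₂ : ℝ) / q₂)) :=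
        mul_dni_le_dni_mul_of_coprime hcop hy₁Y hy₂Y hd₁.le hd₂.le hYR

theorem no_coprime_pair_close_to_integers
    (Q : ℝ) (hQ : 1 ≤ Q)
    (a₁ q₁ a₂ q₂ : ℕ)
    (ha₁ : 1 ≤ a₁) (ha₂ : 1 ≤ a₂)
    (haq₁ : a₁ ≤ q₁) (haq₂ : a₂ ≤ q₂)
    (hq₁ : (q₁ : ℝ) ≤ Q) (hq₂ : (q₂ : ℝ) ≤ Q)
    (hcop₁ : Nat.gcd a₁ q₁ = 1) (hcop₂ : Nat.gcd a₂ q₂ = 1)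
    (hne : (a₁ : ℝ) / q₁ ≠ (a₂ : ℝ) / q₂)
    (Y₁ Y R : ℝ) (hY₁ : 0 < Y₁) (hY : Y₁ ≤ Y)
    (hR : max (max (Q^2 / Y₁) (4 * Y)) (2 * Q) < R) :
    ¬ ∃ y₁ y₂ : ℕ, 0 < y₁ ∧ 0 < y₂ ∧ Nat.gcd y₁ y₂ = 1 ∧
        (Y₁ ≤ (y₁ : ℝ) ∧ (y₁ : ℝ) ≤ Y) ∧ (Y₁ ≤ (y₂ : ℝ) ∧ (y₂ : ℝ) ≤ Y) ∧
        dni ((y₁ : ℝ) * ((a₁ : ℝ) / q₁ - (a₂ : ℝ) / q₂)) < 1 / R ∧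
        dni ((y₂ : ℝ) * ((a₁ : ℝ) / q₁ - (a₂ : ℝ) / q₂)) < 1 / R :=
  no_coprime_pair_close_to_integers_general Q a₁ q₁ a₂ q₂ ha₁ ha₂ haq₁ haq₂ hq₁ hq₂ hne Y₁ Y R hY₁
    hR
end
end
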